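/- Four generic binary forms of degree 5 generate the degree-6 component of ℂ[x₀,x₁]: i.e., there exist G₁, G₂, G₃, G₄ ∈ ℂ[x₀,x₁]₅ such that the multiplication map (ℂ[x₀,x₁]₁)⁴ → ℂ[x₀,x₁]₆, (L₁,…,L₄) ↦ ∑ LᵢGᵢ, is surjective. -/
import Mathlib


open MvPolynomial

private lemma mono_eq (d : Fin 2 →₀ ℕ) (c : ℂ) :
    (monomial d c : MvPolynomial (Fin 2) ℂ) = C c * X 0 ^ d 0 * X 1 ^ d 1 := by
  rw [monomial_eq, Finsupp.prod_fintype _ _ (fun i => pow_zero _), Fin.prod_univ_two, mul_assoc]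

private lemma hom1 (c : ℂ) (j : Fin 2) :
    (C c * X j : MvPolynomial (Fin 2) ℂ).IsHomogeneous 1 := by
  simpa using (isHomogeneous_C (Fin 2) c).mul (isHomogeneous_X ℂ j)

/-- There exist four binary quintics `G₁,…,G₄` such that every binary sextic
is of the form `∑ Lᵢ Gᵢ` with the `Lᵢ` linear; i.e. four generic binary forms of degree 5
generate the degree-6 component of `ℂ[x₀,x₁]`. -/
theorem stmt_9 :
    ∃ G : Fin 4 → MvPolynomial (Fin 2) ℂ,
      (∀ i, (G i).IsHomogeneous 5) ∧
      ∀ F : MvPolynomial (Fin 2) ℂ, F.IsHomogeneous 6 →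
        ∃ L : Fin 4 → MvPolynomial (Fin 2) ℂ,
          (∀ i, (L i).IsHomogeneous 1) ∧ F = ∑ i, L i * G i := by
  refine ⟨![X 0 ^ 5, X 1 ^ 5, X 0 ^ 4 * X 1, X 0 ^ 2 * X 1 ^ 3], ?_, ?_⟩
  · intro i
    fin_cases i <;> simp only [Matrix.cons_val_zero, Matrix.cons_val_one, Matrix.head_cons,
      Matrix.cons_val_two, Matrix.tail_cons, Matrix.cons_val_three]
    · exact (isHomogeneous_X ℂ 0).pow 5
    · exact (isHomogeneous_X ℂ 1).pow 5
    · simpa using ((isHomogeneous_X ℂ 0).pow 4).mul (isHomogeneous_X ℂ 1)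
    · simpa using ((isHomogeneous_X ℂ 0).pow 2).mul ((isHomogeneous_X ℂ 1).pow 3)
  · intro F hF
    set G : Fin 4 → MvPolynomial (Fin 2) ℂ :=
      ![X 0 ^ 5, X 1 ^ 5, X 0 ^ 4 * X 1, X 0 ^ 2 * X 1 ^ 3] with hG
    -- the property is closed under sums
    have key : ∀ d ∈ F.support, ∃ L : Fin 4 → MvPolynomial (Fin 2) ℂ,
        (∀ i, (L i).IsHomogeneous 1) ∧
        (monomial d (coeff d F)) = ∑ i, L i * G i := by
      intro d hd
      have hdeg : d 0 + d 1 = 6 := by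
        have := hF (mem_support_iff.mp hd)
        simpa [Finsupp.weight_apply, Finsupp.sum_fintype, Fin.sum_univ_two] using this
      set c := coeff d F
      have h1 : d 1 ≤ 6 := by omega
      rw [mono_eq]
      interval_cases h : d 1 <;>
        [ (exact ⟨![C c * X 0, 0, 0, 0], fun i => by
            fin_cases i <;> simp [hom1, isHomogeneous_zero], by
            have h0 : d 0 = 6 := by omega
            simp [h0, hG, Fin.sum_univ_four] <;> ring⟩);
          (exact ⟨![C c * X 1, 0, 0, 0], fun i => by
            fin_cases i <;> simp [hom1, isHomogeneous_zero], by
            have h0 : d 0 = 5 := by omega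
            simp [h0, hG, Fin.sum_univ_four] <;> ring⟩);
          (exact ⟨![0, 0, C c * X 1, 0], fun i => by
            fin_cases i <;> simp [hom1, isHomogeneous_zero], by
            have h0 : d 0 = 4 := by omega
            simp [h0, hG, Fin.sum_univ_four] <;> ring⟩);
          (exact ⟨![0, 0, 0, C c * X 0], fun i => by
            fin_cases i <;> simp [hom1, isHomogeneous_zero], by
            have h0 : d 0 = 3 := by omega
            simp [h0, hG, Fin.sum_univ_four] <;> ring⟩);
          (exact ⟨![0, 0, 0, C c * X 1], fun i => by
            fin_cases i <;> simp [hom1, isHomogeneous_zero], by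
            have h0 : d 0 = 2 := by omega
            simp [h0, hG, Fin.sum_univ_four] <;> ring⟩);
          (exact ⟨![0, C c * X 0, 0, 0], fun i => by
            fin_cases i <;> simp [hom1, isHomogeneous_zero], by
            have h0 : d 0 = 1 := by omega
            simp [h0, hG, Fin.sum_univ_four] <;> ring⟩);
          (exact ⟨![0, C c * X 1, 0, 0], fun i => by
            fin_cases i <;> simp [hom1, isHomogeneous_zero], by
            have h0 : d 0 = 0 := by omega
            simp [h0, hG, Fin.sum_univ_four] <;> ring⟩)]
    -- now sum over the support
    have : ∀ s : Finset (Fin 2 →₀ ℕ), s ⊆ F.support →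
        ∃ L : Fin 4 → MvPolynomial (Fin 2) ℂ,
        (∀ i, (L i).IsHomogeneous 1) ∧
        (∑ d ∈ s, monomial d (coeff d F)) = ∑ i, L i * G i := by
      intro s hs
      induction s using Finset.induction with
      | empty => exact ⟨0, fun i => isHomogeneous_zero _ _ _, by simp⟩
      | @insert a t hnd ih =>
        obtain ⟨L1, hL1, e1⟩ := key a (hs (Finset.mem_insert_self a t))
        obtain ⟨L2, hL2, e2⟩ := ih (fun x hx => hs (Finset.mem_insert_of_mem hx))
        refine ⟨L1 + L2, fun i => (hL1 i).add (hL2 i), ?_⟩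
        rw [Finset.sum_insert hnd, e1, e2, ← Finset.sum_add_distrib]
        exact Finset.sum_congr rfl fun i _ => by simp [add_mul]
    obtain ⟨L, hL, e⟩ := this F.support le_rfl
    exact ⟨L, hL, by rw [← e]; exact F.as_sum⟩
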